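/- arXiv:2407.10161 — 2 statements merged into one kernel-verified Lean document; each statement's English description precedes it below -/
import Mathlib

section
/- Let {J_σ : σ ∈ Σ*} be a homogeneous Moran structure with parameters ([0,1], {n_k}, {r_k}), where n_k ≥ 2 for all k, and let E be the associated homogeneous Moran set. Then there exists a unique Borel probability measure μ on ℝ such that μ(J_σ ∩ E) = 1/(n_1⋯n_k) for every k ≥ 0 and every σ ∈ Σ^k; moreover μ is concentrated on E and vanishes on singletons. -/
open Set MeasureTheory
open scoped ENNReal

/-- `σ = (σ₁, …, σ_k)` is a valid word for the sequence `n`: its `i`-th entry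
(1-based position `i+1` for 0-based index `i`) is smaller than `n (i+1)`. -/
def IsWord (n : ℕ → ℕ) (σ : List ℕ) : Prop :=
  ∀ i : Fin σ.length, σ.get i < n (i + 1)

/-- A homogeneous Moran structure with parameters `([0,1], {n_k}, {r_k})`:
a family of closed intervals `J σ` indexed by words, with `J ∅ = [0,1]`,
nested, with pairwise disjoint interiors at each level, and
`|J (σ*i)| = r_{k} |J σ|` for `σ` of length `k-1`. -/
structure MoranStructure (n : ℕ → ℕ) (r : ℕ → ℝ) where
  J : List ℕ → Set ℝ
  J_empty : J [] = Set.Icc 0 1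
  J_closedInterval : ∀ σ : List ℕ, IsWord n σ → ∃ a b : ℝ, a ≤ b ∧ J σ = Set.Icc a b
  J_subset : ∀ σ : List ℕ, IsWord n σ → ∀ i < n (σ.length + 1), J (σ ++ [i]) ⊆ J σ
  J_disjointInterior : ∀ σ : List ℕ, IsWord n σ → ∀ i < n (σ.length + 1),
      ∀ j < n (σ.length + 1), i ≠ j →
      interior (J (σ ++ [i])) ∩ interior (J (σ ++ [j])) = ∅
  J_diam : ∀ σ : List ℕ, IsWord n σ → ∀ i < n (σ.length + 1),
      Metric.diam (J (σ ++ [i])) = r (σ.length + 1) * Metric.diam (J σ)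

variable {n : ℕ → ℕ} {r : ℕ → ℝ}

/-- The `k`-th approximation `E_k`: the union of all basic intervals of rank `k`. -/
def MoranStructure.approx (M : MoranStructure n r) (k : ℕ) : Set ℝ :=
  ⋃ σ ∈ {σ : List ℕ | σ.length = k ∧ IsWord n σ}, M.J σ

/-- The homogeneous Moran set `E = ⋂_k E_k`. -/
def MoranStructure.moranSet (M : MoranStructure n r) : Set ℝ :=
  ⋂ k, M.approx k

/-- The total gap of rank `k`: `Δ_k = r_1 ⋯ r_{k-1} (1 - n_k r_k)`. -/
noncomputable def totalGap (n : ℕ → ℕ) (r : ℕ → ℝ) (k : ℕ) : ℝ :=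
  (∏ j ∈ Finset.Icc 1 (k - 1), r j) * (1 - (n k : ℝ) * r k)

/-- Distance between two subsets of `ℝ`: `dist(A,B) = inf {|x-y| : x ∈ A, y ∈ B}`. -/
noncomputable def setDist (A B : Set ℝ) : ℝ :=
  sInf {d : ℝ | ∃ x ∈ A, ∃ y ∈ B, d = |x - y|}

/-- The weak separation condition with constant `η₀`. -/
def MoranStructure.WSC (M : MoranStructure n r) (η₀ : ℝ) : Prop :=
  ∀ σ : List ℕ, IsWord n σ → ∀ i < n (σ.length + 1), ∀ j < n (σ.length + 1), i ≠ j →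
    (M.J (σ ++ [i]) ∩ M.J (σ ++ [j])).Nonempty ∨
      setDist (M.J (σ ++ [i])) (M.J (σ ++ [j])) >
        η₀ * (Metric.diam (M.J σ) -
          ∑ m ∈ Finset.range (n (σ.length + 1)), Metric.diam (M.J (σ ++ [m])))

/-- `μ` is the uniform Bernoulli measure of the Moran structure `M`:
a Borel probability measure concentrated on the Moran set, giving each
cylinder of rank `k` measure `1/(n_1 ⋯ n_k)`. -/
def IsUniformBernoulli (M : MoranStructure n r) (μ : Measure ℝ) : Prop :=
  IsProbabilityMeasure μ ∧ μ M.moranSetᶜ = 0 ∧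
    ∀ σ : List ℕ, IsWord n σ →
      μ (M.J σ ∩ M.moranSet) = 1 / ∏ j ∈ Finset.Icc 1 σ.length, (n j : ℝ≥0∞)

/-- `I` is a connected component of the set `S ⊆ ℝ`. -/
def IsCC (S I : Set ℝ) : Prop := ∃ x ∈ S, I = connectedComponentIn S x

/-- `X` is `δ`-connected: any two points of `X` are joined by a finite chain
of points of `X` with consecutive distances at most `δ`. -/
def DeltaConnected (δ : ℝ) (X : Set ℝ) : Prop :=
  ∀ x ∈ X, ∀ y ∈ X, ∃ (m : ℕ) (z : Fin (m + 1) → ℝ),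
    (∀ i, z i ∈ X) ∧ z 0 = x ∧ z (Fin.last m) = y ∧
      ∀ i : Fin m, |z i.castSucc - z i.succ| ≤ δ

/-!
Code the words `ω ∈ ∏ₖ {0, …, n_k - 1}` by the point `⨆ₖ inf J_{ω|k}` of the nested intervals
`J_{ω|k}`, and push the uniform product measure forward along this coding map. Basic intervals of
rank `k` have positive length and disjoint interiors, so a point lies in at most two of them; the
fibres of the coding map therefore have measure at most `2 / (n_1 ⋯ n_k)` for every `k`, and the
image measure has no atoms. Two distinct intervals of the same rank meet in at most one point, so
the set `O` of such meeting points is countable, hence null; off `O` a point of `E` determines the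
rank-`k` interval containing it, which identifies `J_σ ∩ E` with the image of the cylinder of `σ`
up to a null set.

For uniqueness, a measure with the prescribed cylinder values is atomless and concentrated on
`E \ O`, where the rank-`k` pieces are disjoint and refine each other. As `diam J_σ ≤ 2^{-|σ|}`,
an open set `U` meets `E \ O` in the increasing union over `k` of the rank-`k` pieces lying in
`U`, so the cylinder values determine the measure of every open set.
-/

open Filter Topology Function

section Intervals

variable {α ι : Type*} [LinearOrder α] [DenselyOrdered α]

theorem subsingleton_Icc_inter_Icc_of_disjoint_Ioo {a b c d : α}
    (h : Disjoint (Ioo a b) (Ioo c d)) : (Icc a b ∩ Icc c d).Subsingleton := by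
  rw [Icc_inter_Icc]
  refine subsingleton_Icc_of_ge (not_lt.1 fun hlt => not_disjoint_iff_nonempty_inter.2 ?_ h)
  rw [Ioo_inter_Ioo]
  exact nonempty_Ioo.2 hlt

theorem subsingleton_setOf_mem_Ioc {S : Set ι} {a b : ι → α}
    (h : S.Pairwise (Disjoint on fun i => Ioo (a i) (b i))) (x : α) :
    {i ∈ S | x ∈ Ioc (a i) (b i)}.Subsingleton := by
  rintro i ⟨hi, hai, hbi⟩ j ⟨hj, haj, hbj⟩
  by_contra hij
  refine not_disjoint_iff_nonempty_inter.2 ?_ (h hi hj hij)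
  rw [Ioo_inter_Ioo]
  exact nonempty_Ioo.2 ((max_lt hai haj).trans_le (le_min hbi hbj))

theorem subsingleton_setOf_mem_Ico {S : Set ι} {a b : ι → α}
    (h : S.Pairwise (Disjoint on fun i => Ioo (a i) (b i))) (x : α) :
    {i ∈ S | x ∈ Ico (a i) (b i)}.Subsingleton := by
  rintro i ⟨hi, hai, hbi⟩ j ⟨hj, haj, hbj⟩
  by_contra hij
  refine not_disjoint_iff_nonempty_inter.2 ?_ (h hi hj hij)
  rw [Ioo_inter_Ioo]
  exact nonempty_Ioo.2 ((max_le hai haj).trans_lt (lt_min hbi hbj))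

end Intervals

section Words

variable {n : ℕ → ℕ} {σ : List ℕ}

theorem isWord_nil (n : ℕ → ℕ) : IsWord n [] := fun i => i.elim0

theorem isWord_iff : IsWord n σ ↔ ∀ i (hi : i < σ.length), σ[i] < n (i + 1) :=
  Fin.forall_iff

theorem isWord_append_singleton {c : ℕ} :
    IsWord n (σ ++ [c]) ↔ IsWord n σ ∧ c < n (σ.length + 1) := by
  simp only [isWord_iff, List.length_append, List.length_singleton]
  constructor
  · intro h
    refine ⟨fun i hi => ?_, by simpa using h σ.length (by omega)⟩
    simpa [List.getElem_append_left hi] using h i (by omega)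
  · rintro ⟨h, hc⟩ i hi
    rcases Nat.lt_succ_iff_lt_or_eq.1 hi with hi | rfl
    · simpa [List.getElem_append_left hi] using h i hi
    · simpa using hc

@[elab_as_elim]
theorem IsWord.induction {P : List ℕ → Prop} (nil : P [])
    (append_singleton : ∀ σ c, IsWord n σ → c < n (σ.length + 1) → P σ → P (σ ++ [c]))
    (hσ : IsWord n σ) : P σ := by
  induction σ using List.reverseRecOn with
  | nil => exact nil
  | append_singleton σ c ih =>
    obtain ⟨hσ, hc⟩ := isWord_append_singleton.1 hσ
    exact append_singleton σ c hσ hc (ih hσ)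

end Words

section Products

variable {n : ℕ → ℕ}

theorem one_div_prod_le_inv_two_pow (hn : ∀ k ≥ 1, 2 ≤ n k) (k : ℕ) :
    1 / ∏ j ∈ Finset.Icc 1 k, (n j : ℝ≥0∞) ≤ 2⁻¹ ^ k := by
  have h : (2 : ℝ≥0∞) ^ k ≤ ∏ j ∈ Finset.Icc 1 k, (n j : ℝ≥0∞) := by
    simpa using Finset.pow_card_le_prod (Finset.Icc 1 k) (fun j => (n j : ℝ≥0∞)) 2
      fun j hj => by exact_mod_cast hn j (Finset.mem_Icc.1 hj).1
  rw [one_div, ← ENNReal.inv_pow]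
  exact ENNReal.inv_le_inv.2 h

theorem tendsto_one_div_prod (hn : ∀ k ≥ 1, 2 ≤ n k) :
    Tendsto (fun k => 1 / ∏ j ∈ Finset.Icc 1 k, (n j : ℝ≥0∞)) atTop (𝓝 0) :=
  tendsto_of_tendsto_of_tendsto_of_le_of_le tendsto_const_nhds
    (ENNReal.tendsto_pow_atTop_nhds_zero_of_lt_one (by norm_num)) (fun _ => zero_le)
    (one_div_prod_le_inv_two_pow hn)

end Products

namespace MoranStructure

variable {n : ℕ → ℕ} {r : ℕ → ℝ} (M : MoranStructure n r) {σ τ : List ℕ} {x : ℝ}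

theorem J_eq_Icc (hσ : IsWord n σ) : M.J σ = Icc (sInf (M.J σ)) (sSup (M.J σ)) := by
  obtain ⟨a, b, hab, hJ⟩ := M.J_closedInterval σ hσ
  rw [hJ, csInf_Icc hab, csSup_Icc hab]

theorem isClosed_J (hσ : IsWord n σ) : IsClosed (M.J σ) := by
  rw [M.J_eq_Icc hσ]
  exact isClosed_Icc

theorem interior_J (hσ : IsWord n σ) : interior (M.J σ) = Ioo (sInf (M.J σ)) (sSup (M.J σ)) := by
  rw [M.J_eq_Icc hσ, interior_Icc, ← M.J_eq_Icc hσ]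

theorem diam_J (hσ : IsWord n σ) : Metric.diam (M.J σ) = ∏ j ∈ Finset.Icc 1 σ.length, r j := by
  refine IsWord.induction ?_ (fun σ c hσ hc ih => ?_) hσ
  · simp [M.J_empty, Real.diam_Icc zero_le_one]
  · rw [M.J_diam σ hσ c hc, ih, List.length_append, List.length_singleton,
      Finset.prod_Icc_succ_top (Nat.le_add_left 1 σ.length), mul_comm]

theorem sInf_J_le_sSup_J (hσ : IsWord n σ) : sInf (M.J σ) ≤ sSup (M.J σ) := by
  obtain ⟨a, b, hab, hJ⟩ := M.J_closedInterval σ hσ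
  rwa [hJ, csInf_Icc hab, csSup_Icc hab]

theorem sInf_J_lt_sSup_J (hr : ∀ k ≥ 1, 0 < r k) (hσ : IsWord n σ) :
    sInf (M.J σ) < sSup (M.J σ) := by
  obtain ⟨a, b, hab, hJ⟩ := M.J_closedInterval σ hσ
  have hdiam := M.diam_J hσ
  rw [hJ, Real.diam_Icc hab] at hdiam
  rw [hJ, csInf_Icc hab, csSup_Icc hab]
  linarith [Finset.prod_pos fun j (hj : j ∈ Finset.Icc 1 σ.length) => hr j (Finset.mem_Icc.1 hj).1]

theorem diam_J_le (hn : ∀ k ≥ 1, 2 ≤ n k) (hr : ∀ k ≥ 1, 0 < r k ∧ (n k : ℝ) * r k ≤ 1)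
    (hσ : IsWord n σ) : Metric.diam (M.J σ) ≤ (1 / 2) ^ σ.length := by
  have hr_le : ∀ j ∈ Finset.Icc 1 σ.length, r j ≤ 1 / 2 := fun j hj => by
    have hj := (Finset.mem_Icc.1 hj).1
    have : (2 : ℝ) ≤ n j := by exact_mod_cast hn j hj
    nlinarith [hr j hj]
  rw [M.diam_J hσ]
  calc ∏ j ∈ Finset.Icc 1 σ.length, r j ≤ ∏ _j ∈ Finset.Icc 1 σ.length, (1 / 2 : ℝ) :=
        Finset.prod_le_prod (fun j hj => (hr j (Finset.mem_Icc.1 hj).1).1.le) hr_le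
    _ = (1 / 2) ^ σ.length := by simp

theorem disjoint_interior_J (hσ : IsWord n σ) (hτ : IsWord n τ) (hl : σ.length = τ.length)
    (hne : σ ≠ τ) : Disjoint (interior (M.J σ)) (interior (M.J τ)) := by
  induction σ using List.reverseRecOn generalizing τ with
  | nil => exact absurd (List.eq_nil_of_length_eq_zero hl.symm).symm hne
  | append_singleton σ c ih =>
    rcases τ.eq_nil_or_concat' with rfl | ⟨τ, d, rfl⟩
    · simp at hl
    obtain ⟨hσ, hc⟩ := isWord_append_singleton.1 hσ
    obtain ⟨hτ, hd⟩ := isWord_append_singleton.1 hτ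
    have hl : σ.length = τ.length := by simpa using hl
    by_cases hστ : σ = τ
    · subst hστ
      have hcd : c ≠ d := fun h => hne (h ▸ rfl)
      exact disjoint_iff_inter_eq_empty.2 (M.J_disjointInterior σ hσ c hc d hd hcd)
    · exact (ih hσ hτ hl hστ).mono (interior_mono (M.J_subset σ hσ c hc))
        (interior_mono (M.J_subset τ hτ d hd))

theorem subsingleton_J_inter_J (hσ : IsWord n σ) (hτ : IsWord n τ) (hl : σ.length = τ.length)
    (hne : σ ≠ τ) : (M.J σ ∩ M.J τ).Subsingleton := by
  have h := M.disjoint_interior_J hσ hτ hl hne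
  rw [M.interior_J hσ, M.interior_J hτ] at h
  rw [M.J_eq_Icc hσ, M.J_eq_Icc hτ]
  exact subsingleton_Icc_inter_Icc_of_disjoint_Ioo h

theorem mem_moranSet :
    x ∈ M.moranSet ↔ ∀ k, ∃ σ, (σ.length = k ∧ IsWord n σ) ∧ x ∈ M.J σ := by
  simp only [moranSet, approx, mem_iInter, mem_iUnion₂, mem_ofPred_eq, exists_prop]

theorem moranSet_subset_Icc : M.moranSet ⊆ Icc 0 1 := fun x hx => by
  obtain ⟨σ, ⟨hσl, -⟩, hx⟩ := M.mem_moranSet.1 hx 0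
  rwa [List.eq_nil_of_length_eq_zero hσl, M.J_empty] at hx

theorem measurableSet_moranSet : MeasurableSet M.moranSet :=
  .iInter fun _ => .biUnion (to_countable _) fun _ hσ => (M.isClosed_J hσ.2).measurableSet

def overlapSet : Set ℝ :=
  ⋃ σ : List ℕ, ⋃ τ : List ℕ, ⋃ (_ : IsWord n σ ∧ IsWord n τ ∧ σ.length = τ.length ∧ σ ≠ τ),
    M.J σ ∩ M.J τ

theorem countable_overlapSet : M.overlapSet.Countable :=
  countable_iUnion fun _ => countable_iUnion fun _ => countable_iUnion fun h =>
    (M.subsingleton_J_inter_J h.1 h.2.1 h.2.2.1 h.2.2.2).countable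

theorem eq_of_mem_J_of_notMem_overlapSet (hσ : IsWord n σ) (hτ : IsWord n τ)
    (hl : σ.length = τ.length) (hxσ : x ∈ M.J σ) (hxτ : x ∈ M.J τ) (hx : x ∉ M.overlapSet) :
    σ = τ := by
  by_contra hne
  exact hx (mem_iUnion₂.2 ⟨σ, τ, mem_iUnion.2 ⟨⟨hσ, hτ, hl, hne⟩, hxσ, hxτ⟩⟩)

theorem exists_mem_J_append_singleton (hσ : IsWord n σ) (hxσ : x ∈ M.J σ)
    (hx : x ∈ M.moranSet \ M.overlapSet) : ∃ c < n (σ.length + 1), x ∈ M.J (σ ++ [c]) := by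
  obtain ⟨τ, ⟨hτl, hτ⟩, hxτ⟩ := M.mem_moranSet.1 hx.1 (σ.length + 1)
  rcases τ.eq_nil_or_concat' with rfl | ⟨π, c, rfl⟩
  · simp at hτl
  obtain ⟨hπ, hc⟩ := isWord_append_singleton.1 hτ
  have hπl : π.length = σ.length := by simpa using hτl
  obtain rfl := M.eq_of_mem_J_of_notMem_overlapSet hπ hσ hπl (M.J_subset π hπ c hc hxτ) hxσ hx.2
  exact ⟨c, hc, hxτ⟩

theorem exists_J_subset_of_isOpen (hn : ∀ k ≥ 1, 2 ≤ n k)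
    (hr : ∀ k ≥ 1, 0 < r k ∧ (n k : ℝ) * r k ≤ 1) {U : Set ℝ} (hU : IsOpen U)
    (hx : x ∈ U ∩ M.moranSet) : ∃ σ, IsWord n σ ∧ M.J σ ⊆ U ∧ x ∈ M.J σ := by
  obtain ⟨ε, hε, hball⟩ := Metric.isOpen_iff.1 hU x hx.1
  obtain ⟨k, hk⟩ := exists_pow_lt_of_lt_one hε (by norm_num : (1 / 2 : ℝ) < 1)
  obtain ⟨σ, ⟨rfl, hσ⟩, hxσ⟩ := M.mem_moranSet.1 hx.2 k
  refine ⟨σ, hσ, fun y hy => hball ?_, hxσ⟩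
  calc dist y x ≤ Metric.diam (M.J σ) := Metric.dist_le_diam_of_mem
        (by rw [M.J_eq_Icc hσ]; exact Metric.isBounded_Icc _ _) hy hxσ
    _ ≤ (1 / 2) ^ σ.length := M.diam_J_le hn hr hσ
    _ < ε := hk

end MoranStructure

section UniformBernoulli

variable {n : ℕ → ℕ} {r : ℕ → ℝ} {M : MoranStructure n r} {μ ν : Measure ℝ}

theorem isUniformBernoulli_iff :
    IsUniformBernoulli M μ ↔ IsProbabilityMeasure μ ∧ ∀ σ : List ℕ, IsWord n σ →
      μ (M.J σ ∩ M.moranSet) = 1 / ∏ j ∈ Finset.Icc 1 σ.length, (n j : ℝ≥0∞) := by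
  refine ⟨fun h => ⟨h.1, h.2.2⟩, fun ⟨hμ, hcyl⟩ => ⟨hμ, ?_, hcyl⟩⟩
  rw [prob_compl_eq_zero_iff M.measurableSet_moranSet]
  simpa [M.J_empty, inter_eq_right.2 M.moranSet_subset_Icc] using hcyl [] (isWord_nil n)

theorem IsUniformBernoulli.nullSingletonClass (hn : ∀ k ≥ 1, 2 ≤ n k)
    (h : IsUniformBernoulli M μ) : NullSingletonClass μ := by
  refine ⟨fun x => ?_⟩
  by_cases hx : x ∈ M.moranSet
  · refine nonpos_iff_eq_zero.1 (ge_of_tendsto' (tendsto_one_div_prod hn) fun k => ?_)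
    obtain ⟨σ, ⟨rfl, hσ⟩, hxσ⟩ := M.mem_moranSet.1 hx k
    rw [← h.2.2 σ hσ]
    exact measure_mono (singleton_subset_iff.2 ⟨hxσ, hx⟩)
  · exact measure_mono_null (singleton_subset_iff.2 hx) h.2.1

theorem MoranStructure.measure_isOpen_eq_iSup_tsum (hn : ∀ k ≥ 1, 2 ≤ n k)
    (hr : ∀ k ≥ 1, 0 < r k ∧ (n k : ℝ) * r k ≤ 1) (hE : μ M.moranSetᶜ = 0)
    (hO : μ M.overlapSet = 0) {U : Set ℝ} (hU : IsOpen U) :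
    μ U = ⨆ k, ∑' σ : {σ : List ℕ | σ.length = k ∧ IsWord n σ ∧ M.J σ ⊆ U},
      μ (M.J σ ∩ M.moranSet) := by
  set E' := M.moranSet \ M.overlapSet
  set B : ℕ → Set ℝ := fun k =>
    ⋃ σ ∈ {σ : List ℕ | σ.length = k ∧ IsWord n σ ∧ M.J σ ⊆ U}, M.J σ ∩ E'
  have hE' : μ E'ᶜ = 0 := by
    rw [Set.compl_sdiff]
    exact measure_union_null hO hE
  have hcover : U ∩ E' = ⋃ k, B k := by
    ext x
    simp only [B, mem_iUnion, mem_inter_iff, mem_ofPred_eq, exists_prop]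
    constructor
    · rintro ⟨hxU, hx⟩
      obtain ⟨σ, hσ, hσU, hxσ⟩ := M.exists_J_subset_of_isOpen hn hr hU ⟨hxU, hx.1⟩
      exact ⟨σ.length, σ, ⟨rfl, hσ, hσU⟩, hxσ, hx⟩
    · rintro ⟨k, σ, ⟨-, -, hσU⟩, hxσ, hx⟩
      exact ⟨hσU hxσ, hx⟩
  have hmono : Monotone B := monotone_nat_of_le_succ fun k x hx => by
    obtain ⟨σ, ⟨rfl, hσ, hσU⟩, hxσ, hx⟩ := mem_iUnion₂.1 hx
    obtain ⟨c, hc, hxc⟩ := M.exists_mem_J_append_singleton hσ hxσ hx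
    exact mem_biUnion ⟨by simp, isWord_append_singleton.2 ⟨hσ, hc⟩,
      (M.J_subset σ hσ c hc).trans hσU⟩ ⟨hxc, hx⟩
  have hB : ∀ k, μ (B k) = ∑' σ : {σ : List ℕ | σ.length = k ∧ IsWord n σ ∧ M.J σ ⊆ U},
      μ (M.J σ ∩ M.moranSet) := fun k => by
    rw [measure_biUnion (to_countable _)]
    · refine tsum_congr fun σ => ?_
      rw [← inter_sdiff_assoc]
      exact measure_sdiff_null hO
    · intro σ hσ τ hτ hne
      exact disjoint_left.2 fun x hx hx' => hne (M.eq_of_mem_J_of_notMem_overlapSet hσ.2.1 hτ.2.1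
        (hσ.1.trans hτ.1.symm) hx.1 hx'.1 hx.2.2)
    · exact fun σ hσ => (M.isClosed_J hσ.2.1).measurableSet.inter
        (M.measurableSet_moranSet.diff M.countable_overlapSet.measurableSet)
  calc μ U = μ (U ∩ E') := (measure_inter_conull hE').symm
    _ = ⨆ k, μ (B k) := by rw [hcover, hmono.measure_iUnion]
    _ = _ := iSup_congr hB

theorem IsUniformBernoulli.unique (hn : ∀ k ≥ 1, 2 ≤ n k)
    (hr : ∀ k ≥ 1, 0 < r k ∧ (n k : ℝ) * r k ≤ 1) (hμ : IsUniformBernoulli M μ)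
    (hν : IsUniformBernoulli M ν) : μ = ν := by
  have := hμ.1
  have := hμ.nullSingletonClass hn
  have := hν.nullSingletonClass hn
  refine ext_of_generate_finite _ BorelSpace.measurable_eq isPiSystem_isOpen (fun U hU => ?_)
    (by rw [measure_univ, hν.1.measure_univ])
  rw [M.measure_isOpen_eq_iSup_tsum hn hr hμ.2.1 (M.countable_overlapSet.measure_zero μ) hU,
    M.measure_isOpen_eq_iSup_tsum hn hr hν.2.1 (M.countable_overlapSet.measure_zero ν) hU]
  exact iSup_congr fun k => tsum_congr fun σ => by rw [hμ.2.2 σ σ.2.2.1, hν.2.2 σ σ.2.2.1]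

end UniformBernoulli

section Coding

variable {n : ℕ → ℕ} {σ : List ℕ}

def prefixWord (ω : ∀ k, Fin (n (k + 1))) (k : ℕ) : List ℕ :=
  List.ofFn fun i : Fin k => (ω i : ℕ)

variable {ω : ∀ k, Fin (n (k + 1))} {k : ℕ}

theorem length_prefixWord : (prefixWord ω k).length = k :=
  List.length_ofFn

theorem prefixWord_succ : prefixWord ω (k + 1) = prefixWord ω k ++ [(ω k : ℕ)] := by
  rw [prefixWord, List.ofFn_succ', List.concat_eq_append]
  rfl

theorem isWord_prefixWord : IsWord n (prefixWord ω k) :=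
  isWord_iff.2 fun i hi => by simp [prefixWord]

theorem setOf_prefixWord_eq :
    {ω : ∀ k, Fin (n (k + 1)) | prefixWord ω σ.length = σ} =
      (Finset.range σ.length : Set ℕ).pi
        fun i => {j : Fin (n (i + 1)) | (j : ℕ) = σ.getD i 0} := by
  ext ω
  simp only [prefixWord, mem_ofPred_eq, Set.mem_pi, Finset.coe_range, mem_Iio,
    List.ext_getElem_iff, List.length_ofFn, List.getElem_ofFn, true_and]
  refine ⟨fun h i hi => ?_, fun h i hi _ => ?_⟩
  · rw [List.getD_eq_getElem _ _ hi]
    exact h i hi hi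
  · rw [h i hi, List.getD_eq_getElem _ _ hi]

variable (n) in
noncomputable def uniformProduct : Measure (∀ k, Fin (n (k + 1))) :=
  Measure.infinitePi fun _ => ProbabilityTheory.uniformOn univ

variable [∀ k, NeZero (n (k + 1))]

instance : IsProbabilityMeasure (uniformProduct n) := by
  unfold uniformProduct
  infer_instance

theorem uniformProduct_setOf_prefixWord_eq (hσ : IsWord n σ) :
    uniformProduct n {ω | prefixWord ω σ.length = σ} =
      1 / ∏ j ∈ Finset.Icc 1 σ.length, (n j : ℝ≥0∞) := by
  have hfactor : ∀ i ∈ Finset.range σ.length,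
      ProbabilityTheory.uniformOn univ {j : Fin (n (i + 1)) | (j : ℕ) = σ.getD i 0} =
        (n (i + 1) : ℝ≥0∞)⁻¹ := fun i hi => by
    have hi := Finset.mem_range.1 hi
    have hsingle : {j : Fin (n (i + 1)) | (j : ℕ) = σ.getD i 0} =
        {⟨σ.getD i 0, by rw [List.getD_eq_getElem _ _ hi]; exact isWord_iff.1 hσ i hi⟩} := by
      ext j
      simp [Fin.ext_iff]
    rw [hsingle, ProbabilityTheory.uniformOn_univ, Measure.count_singleton, Fintype.card_fin,
      one_div]
  rw [uniformProduct, setOf_prefixWord_eq, Measure.infinitePi_pi _ fun _ _ => .of_discrete,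
    Finset.prod_congr rfl hfactor, ← ENNReal.prod_inv_distrib (fun _ _ _ _ => by simp), one_div,
    Finset.range_eq_Ico, Finset.prod_Ico_add' (fun j => (n j : ℝ≥0∞)), zero_add,
    Finset.Ico_add_one_right_eq_Icc]

theorem uniformProduct_setOf_prefixWord_mem_le {S : Set (List ℕ)} (hS : S.Subsingleton)
    (hSk : ∀ σ ∈ S, σ.length = k ∧ IsWord n σ) :
    uniformProduct n {ω | prefixWord ω k ∈ S} ≤ 1 / ∏ j ∈ Finset.Icc 1 k, (n j : ℝ≥0∞) := by
  rcases hS.eq_empty_or_singleton with rfl | ⟨σ, rfl⟩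
  · simp
  · obtain ⟨rfl, hσ⟩ := hSk σ rfl
    exact (uniformProduct_setOf_prefixWord_eq hσ).le

end Coding

namespace MoranStructure

variable {n : ℕ → ℕ} {r : ℕ → ℝ} (M : MoranStructure n r)

noncomputable def code (ω : ∀ k, Fin (n (k + 1))) : ℝ :=
  ⨆ k, sInf (M.J (prefixWord ω k))

theorem code_mem_J (ω : ∀ k, Fin (n (k + 1))) (k : ℕ) : M.code ω ∈ M.J (prefixWord ω k) := by
  have hanti : Antitone fun k =>
      Icc (sInf (M.J (prefixWord ω k))) (sSup (M.J (prefixWord ω k))) := by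
    refine antitone_nat_of_succ_le fun k => ?_
    rw [← M.J_eq_Icc isWord_prefixWord, ← M.J_eq_Icc isWord_prefixWord, prefixWord_succ]
    exact M.J_subset _ isWord_prefixWord _ (by simp [length_prefixWord])
  have h := mem_iInter.1 (ciSup_mem_iInter_Icc_of_antitone_Icc hanti
    fun k => M.sInf_J_le_sSup_J isWord_prefixWord) k
  rwa [← M.J_eq_Icc isWord_prefixWord] at h

theorem code_mem_moranSet (ω : ∀ k, Fin (n (k + 1))) : M.code ω ∈ M.moranSet :=
  M.mem_moranSet.2 fun k =>
    ⟨prefixWord ω k, ⟨length_prefixWord, isWord_prefixWord⟩, M.code_mem_J ω k⟩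

theorem measurable_code : Measurable M.code := by
  refine Measurable.iSup fun k => ?_
  have h : Measurable fun v : (i : Fin k) → Fin (n (i + 1)) =>
      sInf (M.J (List.ofFn fun i => (v i : ℕ))) := measurable_of_countable _
  exact h.comp (by fun_prop)

variable [∀ k, NeZero (n (k + 1))]

theorem uniformProduct_code_preimage_singleton_eq_zero (hn : ∀ k ≥ 1, 2 ≤ n k)
    (hr : ∀ k ≥ 1, 0 < r k) (x : ℝ) : uniformProduct n (M.code ⁻¹' {x}) = 0 := by
  have hlim : Tendsto (fun k => 2 * (1 / ∏ j ∈ Finset.Icc 1 k, (n j : ℝ≥0∞))) atTop (𝓝 0) := by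
    simpa using ENNReal.Tendsto.const_mul (tendsto_one_div_prod hn) (a := 2) (by simp)
  refine nonpos_iff_eq_zero.1 (ge_of_tendsto' hlim fun k => ?_)
  set S := {σ : List ℕ | σ.length = k ∧ IsWord n σ}
  have hdisj : S.Pairwise (Disjoint on fun σ => Ioo (sInf (M.J σ)) (sSup (M.J σ))) :=
    fun σ hσ τ hτ hne => by
      simpa only [M.interior_J hσ.2, M.interior_J hτ.2] using
        M.disjoint_interior_J hσ.2 hτ.2 (hσ.1.trans hτ.1.symm) hne
  have hsub : M.code ⁻¹' {x} ⊆
      {ω | prefixWord ω k ∈ {σ ∈ S | x ∈ Ioc (sInf (M.J σ)) (sSup (M.J σ))}} ∪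
        {ω | prefixWord ω k ∈ {σ ∈ S | x ∈ Ico (sInf (M.J σ)) (sSup (M.J σ))}} := by
    rintro ω rfl
    have hω : prefixWord ω k ∈ S := ⟨length_prefixWord, isWord_prefixWord⟩
    have hx := M.code_mem_J ω k
    rw [M.J_eq_Icc isWord_prefixWord] at hx
    rcases hx.1.lt_or_eq with h | h
    · exact Or.inl ⟨hω, h, hx.2⟩
    · exact Or.inr ⟨hω, h.le, h ▸ M.sInf_J_lt_sSup_J hr isWord_prefixWord⟩
  calc uniformProduct n (M.code ⁻¹' {x})
      ≤ 1 / ∏ j ∈ Finset.Icc 1 k, (n j : ℝ≥0∞) + 1 / ∏ j ∈ Finset.Icc 1 k, (n j : ℝ≥0∞) :=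
        (measure_mono hsub).trans <| (measure_union_le _ _).trans <| add_le_add
          (uniformProduct_setOf_prefixWord_mem_le (subsingleton_setOf_mem_Ioc hdisj x)
            fun σ hσ => hσ.1)
          (uniformProduct_setOf_prefixWord_mem_le (subsingleton_setOf_mem_Ico hdisj x)
            fun σ hσ => hσ.1)
    _ = 2 * (1 / ∏ j ∈ Finset.Icc 1 k, (n j : ℝ≥0∞)) := (two_mul _).symm

theorem nullSingletonClass_map_code (hn : ∀ k ≥ 1, 2 ≤ n k) (hr : ∀ k ≥ 1, 0 < r k) :
    NullSingletonClass ((uniformProduct n).map M.code) := by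
  refine ⟨fun x => ?_⟩
  rw [Measure.map_apply M.measurable_code (measurableSet_singleton x)]
  exact M.uniformProduct_code_preimage_singleton_eq_zero hn hr x

theorem isUniformBernoulli_map_code (hn : ∀ k ≥ 1, 2 ≤ n k) (hr : ∀ k ≥ 1, 0 < r k) :
    IsUniformBernoulli M ((uniformProduct n).map M.code) := by
  have := M.nullSingletonClass_map_code hn hr
  have hE : M.code ⁻¹' M.moranSet = univ := eq_univ_of_forall M.code_mem_moranSet
  refine isUniformBernoulli_iff.2
    ⟨Measure.isProbabilityMeasure_map M.measurable_code.aemeasurable, fun σ hσ => ?_⟩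
  have hJE := (M.isClosed_J hσ).measurableSet.inter M.measurableSet_moranSet
  refine le_antisymm ?_ ?_
  · rw [← measure_sdiff_null (M.countable_overlapSet.measure_zero _),
      Measure.map_apply M.measurable_code (hJE.diff M.countable_overlapSet.measurableSet),
      ← uniformProduct_setOf_prefixWord_eq hσ]
    exact measure_mono fun ω ⟨⟨hωσ, _⟩, hωO⟩ => M.eq_of_mem_J_of_notMem_overlapSet
      isWord_prefixWord hσ length_prefixWord (M.code_mem_J ω _) hωσ hωO
  · rw [Measure.map_apply M.measurable_code hJE, preimage_inter, hE, inter_univ,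
      ← uniformProduct_setOf_prefixWord_eq hσ]
    exact measure_mono fun ω (hω : prefixWord ω σ.length = σ) => hω ▸ M.code_mem_J ω σ.length

end MoranStructure

/-- **Existence and uniqueness of the uniform Bernoulli measure.**
For a homogeneous Moran structure with `n_k ≥ 2`, there is a unique Borel
probability measure `μ` on `ℝ` with `μ(J_σ ∩ E) = 1/(n_1 ⋯ n_k)` for every word
`σ` of length `k`; moreover `μ` is concentrated on `E` and vanishes on singletons. -/
theorem moran_uniformBernoulli_existsUnique
    (n : ℕ → ℕ) (r : ℕ → ℝ)
    (hn : ∀ k ≥ 1, 2 ≤ n k)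
    (hr : ∀ k ≥ 1, 0 < r k ∧ (n k : ℝ) * r k ≤ 1)
    (M : MoranStructure n r) :
    ∃ μ : Measure ℝ,
      (IsProbabilityMeasure μ ∧
        ∀ σ : List ℕ, IsWord n σ →
          μ (M.J σ ∩ M.moranSet) = 1 / ∏ j ∈ Finset.Icc 1 σ.length, (n j : ℝ≥0∞)) ∧
      (∀ μ' : Measure ℝ, IsProbabilityMeasure μ' →
        (∀ σ : List ℕ, IsWord n σ →
          μ' (M.J σ ∩ M.moranSet) = 1 / ∏ j ∈ Finset.Icc 1 σ.length, (n j : ℝ≥0∞)) →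
        μ' = μ) ∧
      μ M.moranSetᶜ = 0 ∧ (∀ x : ℝ, μ {x} = 0) := by
  have : ∀ k, NeZero (n (k + 1)) := fun k => ⟨by have := hn (k + 1) (by omega); omega⟩
  have hμ := M.isUniformBernoulli_map_code hn fun k hk => (hr k hk).1
  have := hμ.nullSingletonClass hn
  exact ⟨_, isUniformBernoulli_iff.1 hμ,
    fun μ' hμ' hcyl => (isUniformBernoulli_iff.2 ⟨hμ', hcyl⟩).unique hn hr hμ,
    hμ.2.1, measure_singleton⟩
end

section
/- Let {J_σ} be a homogeneous Moran structure with parameters ([0,1], {n_k}, {r_k}) and assume n_k·r_k < 1 for all k ≥ 1. Then for every k ≥ 1, each connected component of the k-th approximation E_k is a union of basic intervals J_σ (σ ∈ Σ^k), and it contains at most 2·n_k of them. -/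
open Set MeasureTheory
open scoped ENNReal

variable {n : ℕ → ℕ} {r : ℕ → ℝ}

/-!
Let `I` be a component of `E_{k+1}` and call a rank-`k` interval `J τ` a parent if it meets `I`.
By measure, the `n_{k+1}` children of `J τ` have total length `n_{k+1} r_{k+1} |J τ| < |J τ|`,
and all other rank-`(k+1)` intervals meet the interior of `J τ` in a null set, so some point
`x_τ` of the interior of `J τ` lies outside `E_{k+1}`, hence outside the interval `I`.
Two parents whose points `x_τ` lie on the same side of `I` would have overlapping interiors,
so there are at most two parents, and at most `2 n_{k+1}` basic intervals of rank `k+1` in `I`.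
-/

theorem connectedComponentIn_biUnion_eq {ι X : Type*} [TopologicalSpace X] {s : Set ι}
    {A : ι → Set X} (hA : ∀ i ∈ s, IsPreconnected (A i)) (x : X) :
    connectedComponentIn (⋃ i ∈ s, A i) x =
      ⋃ i ∈ {i | i ∈ s ∧ A i ⊆ connectedComponentIn (⋃ i ∈ s, A i) x}, A i := by
  refine Subset.antisymm (fun y hy => ?_) (iUnion₂_subset fun i hi => hi.2)
  obtain ⟨i, hi, hyi⟩ := mem_iUnion₂.mp (connectedComponentIn_subset _ _ hy)
  refine mem_iUnion₂.mpr ⟨i, ⟨hi, ?_⟩, hyi⟩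
  rw [connectedComponentIn_eq hy]
  exact (hA i hi).subset_connectedComponentIn hyi (subset_biUnion_of_mem hi)

theorem Set.OrdConnected.Ioo_inter_Ioo_nonempty {α : Type*} [LinearOrder α] {I : Set α}
    (hI : I.OrdConnected) {p x y a b c d : α} (hp : p ∈ I) (hx : x ∈ Ioo a b) (hy : y ∈ Ioo c d)
    (hxI : x ∉ I) (hyI : y ∉ I) (hab : (Icc a b ∩ I).Nonempty) (hcd : (Icc c d ∩ I).Nonempty)
    (hside : x < p ↔ y < p) : (Ioo a b ∩ Ioo c d).Nonempty := by
  wlog hxy : x ≤ y generalizing x y a b c d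
  · rw [inter_comm]
    exact this hy hx hyI hxI hcd hab hside.symm (le_of_not_ge hxy)
  rcases lt_or_gt_of_ne (show y ≠ p from fun h => hyI (h ▸ hp)) with hyp | hpy
  · obtain ⟨z, hz, hzI⟩ := hab
    have hyz : y < z := lt_of_not_ge fun hzy => hyI (hI.out hzI hp ⟨hzy, hyp.le⟩)
    exact ⟨y, ⟨hx.1.trans_le hxy, hyz.trans_le hz.2⟩, hy⟩
  · have hpx : p < x :=
      lt_of_le_of_ne (not_lt.mp (hside.not.mpr hpy.not_gt)) fun h => hxI (h ▸ hp)
    obtain ⟨z, hz, hzI⟩ := hcd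
    have hzx : z < x := lt_of_not_ge fun hxz => hxI (hI.out hp hzI ⟨hpx.le, hxz⟩)
    exact ⟨x, hx, hz.1.trans_lt hzx, hxy.trans_lt hy.2⟩

variable {k : ℕ}

/-- The index set `Σ^k` of the basic intervals of rank `k`. -/
def words (n : ℕ → ℕ) (k : ℕ) : Set (List ℕ) := {σ | σ.length = k ∧ IsWord n σ}

theorem isWord_append_singleton_s13 {τ : List ℕ} {i : ℕ} :
    IsWord n (τ ++ [i]) ↔ IsWord n τ ∧ i < n (τ.length + 1) := by
  constructor
  · intro h
    exact ⟨fun j => by simpa [List.getElem_append_left j.isLt] using h ⟨j, by simp⟩,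
      by simpa using h ⟨τ.length, by simp⟩⟩
  · rintro ⟨hτ, hi⟩ ⟨j, hj⟩
    rcases Nat.lt_succ_iff_lt_or_eq.mp (by simpa using hj) with hj | rfl
    · simpa [List.getElem_append_left hj] using hτ ⟨j, hj⟩
    · simpa using hi

theorem exists_eq_append_singleton_of_mem_words {σ : List ℕ} (hσ : σ ∈ words n (k + 1)) :
    ∃ τ ∈ words n k, ∃ i < n (k + 1), σ = τ ++ [i] := by
  rcases σ.eq_nil_or_concat with rfl | ⟨τ, i, rfl⟩
  · simp [words] at hσ
  · obtain ⟨hlen, hw⟩ := hσ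
    rw [List.concat_eq_append] at hlen hw ⊢
    have hτ : τ.length = k := by simpa using hlen
    obtain ⟨hτw, hi⟩ := isWord_append_singleton_s13.mp hw
    exact ⟨τ, ⟨hτ, hτw⟩, i, hτ ▸ hi, rfl⟩

theorem words_finite (n : ℕ → ℕ) : ∀ k, (words n k).Finite
  | 0 => (finite_singleton []).subset fun _ hσ => List.length_eq_zero_iff.mp hσ.1
  | k + 1 => ((words_finite n k).image2 (· ++ [·]) (finite_Iio (n (k + 1)))).subset fun _ hσ => by
      obtain ⟨τ, hτ, i, hi, rfl⟩ := exists_eq_append_singleton_of_mem_words hσ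
      exact mem_image2_of_mem hτ hi

theorem ncard_le_ncard_mul_of_parent_mem {S T : Set (List ℕ)} (hT : T.Finite)
    (hSw : S ⊆ words n (k + 1)) (hST : ∀ τ ∈ words n k, ∀ i < n (k + 1), τ ++ [i] ∈ S → τ ∈ T) :
    S.ncard ≤ T.ncard * n (k + 1) := by
  have hfin : (T ×ˢ Iio (n (k + 1))).Finite := hT.prod (finite_Iio _)
  have hsub : S ⊆ (fun p : List ℕ × ℕ => p.1 ++ [p.2]) '' (T ×ˢ Iio (n (k + 1))) := by
    intro σ hσ
    obtain ⟨τ, hτ, i, hi, rfl⟩ := exists_eq_append_singleton_of_mem_words (hSw hσ)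
    exact ⟨(τ, i), ⟨hST τ hτ i hi hσ, hi⟩, rfl⟩
  calc S.ncard ≤ (T ×ˢ Iio (n (k + 1))).ncard :=
        (ncard_le_ncard hsub (hfin.image _)).trans (ncard_image_le hfin)
    _ = T.ncard * n (k + 1) := by simp [ncard_prod]

namespace MoranStructure

variable (M : MoranStructure n r)

theorem diam_J_pos (hr : ∀ k ≥ 1, 0 < r k) {σ : List ℕ} (hσ : IsWord n σ) :
    0 < Metric.diam (M.J σ) := by
  induction σ using List.reverseRecOn with
  | nil => simp [M.J_empty, Real.diam_Icc zero_le_one]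
  | append_singleton τ i ih =>
    obtain ⟨hτ, hi⟩ := isWord_append_singleton_s13.mp hσ
    rw [M.J_diam τ hτ i hi]
    exact mul_pos (hr _ (Nat.le_add_left 1 _)) (ih hτ)

theorem J_nonempty {σ : List ℕ} (hσ : IsWord n σ) : (M.J σ).Nonempty := by
  obtain ⟨a, b, hab, hJ⟩ := M.J_closedInterval σ hσ
  exact hJ ▸ nonempty_Icc.mpr hab

theorem volume_J {σ : List ℕ} (hσ : IsWord n σ) :
    volume (M.J σ) = ENNReal.ofReal (Metric.diam (M.J σ)) := by
  obtain ⟨a, b, hab, hJ⟩ := M.J_closedInterval σ hσ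
  rw [hJ, Real.volume_Icc, Real.diam_Icc hab]

theorem J_ae_eq_interior {σ : List ℕ} (hσ : IsWord n σ) :
    M.J σ =ᵐ[volume] interior (M.J σ) := by
  obtain ⟨a, b, -, hJ⟩ := M.J_closedInterval σ hσ
  rw [hJ, interior_Icc]
  exact Ioo_ae_eq_Icc.symm

theorem disjoint_interior_J_s13 {σ σ' : List ℕ} (hσ : σ ∈ words n k) (hσ' : σ' ∈ words n k)
    (hne : σ ≠ σ') : Disjoint (interior (M.J σ)) (interior (M.J σ')) := by
  induction k generalizing σ σ' with
  | zero =>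
    exact absurd ((List.length_eq_zero_iff.mp hσ.1).trans
      (List.length_eq_zero_iff.mp hσ'.1).symm) hne
  | succ k ih =>
    obtain ⟨τ, hτ, i, hi, rfl⟩ := exists_eq_append_singleton_of_mem_words hσ
    obtain ⟨τ', hτ', j, hj, rfl⟩ := exists_eq_append_singleton_of_mem_words hσ'
    rw [← hτ.1] at hi
    rw [← hτ'.1] at hj
    by_cases hττ' : τ = τ'
    · subst hττ'
      have hij : i ≠ j := fun h => hne (h ▸ rfl)
      exact disjoint_iff_inter_eq_empty.mpr (M.J_disjointInterior τ hτ.2 i hi j hj hij)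
    · exact (ih hτ hτ' hττ').mono (interior_mono (M.J_subset τ hτ.2 i hi))
        (interior_mono (M.J_subset τ' hτ'.2 j hj))

theorem volume_interior_J_inter_J {τ ρ : List ℕ} (hτ : τ ∈ words n k) (hρ : ρ ∈ words n k)
    (hne : τ ≠ ρ) : volume (interior (M.J τ) ∩ M.J ρ) = 0 := by
  rw [measure_congr (ae_eq_set_inter (ae_eq_refl (interior (M.J τ))) (M.J_ae_eq_interior hρ.2)),
    (M.disjoint_interior_J_s13 hτ hρ hne).inter_eq, measure_empty]

theorem interior_J_inter_approx_ae_le {τ : List ℕ} (hτ : τ ∈ words n k) :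
    (interior (M.J τ) ∩ M.approx (k + 1) : Set ℝ) ≤ᵐ[volume]
      ⋃ i ∈ Finset.range (n (k + 1)), M.J (τ ++ [i]) := by
  rw [ae_le_set]
  refine measure_mono_null ?_ ((measure_biUnion_null_iff (to_countable (words n k \ {τ}))).mpr
    fun ρ hρ => M.volume_interior_J_inter_J hτ hρ.1 (Ne.symm hρ.2))
  rintro x ⟨⟨hxτ, hx⟩, hx_children⟩
  obtain ⟨σ, hσ, hxσ⟩ := mem_iUnion₂.mp hx
  obtain ⟨ρ, hρ, i, hi, rfl⟩ := exists_eq_append_singleton_of_mem_words hσ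
  have hρτ : ρ ≠ τ := by
    rintro rfl
    exact hx_children (mem_iUnion₂.mpr ⟨i, Finset.mem_range.mpr hi, hxσ⟩)
  exact mem_iUnion₂.mpr ⟨ρ, ⟨hρ, hρτ⟩, hxτ, M.J_subset ρ hρ.2 i (hρ.1 ▸ hi) hxσ⟩

theorem exists_mem_interior_J_notMem_approx (hr : ∀ k ≥ 1, 0 < r k ∧ (n k : ℝ) * r k < 1)
    {τ : List ℕ} (hτ : τ ∈ words n k) : ∃ x ∈ interior (M.J τ), x ∉ M.approx (k + 1) := by
  by_contra! hsub
  set d := Metric.diam (M.J τ)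
  have hd : 0 < d := M.diam_J_pos (fun k hk => (hr k hk).1) hτ.2
  obtain ⟨hr_pos, hnr⟩ := hr (k + 1) (Nat.le_add_left 1 k)
  have hchild : ∀ i ∈ Finset.range (n (k + 1)),
      volume (M.J (τ ++ [i])) = ENNReal.ofReal (r (k + 1) * d) := fun i hi => by
    have hi : i < n (τ.length + 1) := hτ.1 ▸ Finset.mem_range.mp hi
    rw [M.volume_J (isWord_append_singleton_s13.mpr ⟨hτ.2, hi⟩), M.J_diam τ hτ.2 i hi, hτ.1]
  have hle : ENNReal.ofReal d ≤ n (k + 1) * ENNReal.ofReal (r (k + 1) * d) :=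
    calc ENNReal.ofReal d = volume (interior (M.J τ) ∩ M.approx (k + 1)) := by
          rw [inter_eq_left.mpr hsub, ← measure_congr (M.J_ae_eq_interior hτ.2), M.volume_J hτ.2]
      _ ≤ volume (⋃ i ∈ Finset.range (n (k + 1)), M.J (τ ++ [i])) :=
          measure_mono_ae (M.interior_J_inter_approx_ae_le hτ)
      _ ≤ ∑ i ∈ Finset.range (n (k + 1)), volume (M.J (τ ++ [i])) :=
          measure_biUnion_finset_le _ _
      _ = n (k + 1) * ENNReal.ofReal (r (k + 1) * d) := by
          simp [Finset.sum_congr rfl hchild]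
  rw [← ENNReal.ofReal_natCast, ← ENNReal.ofReal_mul (by positivity),
    ENNReal.ofReal_le_ofReal_iff (by positivity)] at hle
  nlinarith

theorem ncard_setOf_J_inter_nonempty_le_two (hr : ∀ k ≥ 1, 0 < r k ∧ (n k : ℝ) * r k < 1)
    {I : Set ℝ} (hI : I.OrdConnected) (hIE : I ⊆ M.approx (k + 1)) (hIne : I.Nonempty) :
    {τ | τ ∈ words n k ∧ (M.J τ ∩ I).Nonempty}.ncard ≤ 2 := by
  obtain ⟨p, hp⟩ := hIne
  choose! x hx hxE using fun τ (hτ : τ ∈ words n k) => M.exists_mem_interior_J_notMem_approx hr hτ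
  calc _ ≤ (univ : Set Bool).ncard := by
        refine ncard_le_ncard_of_injOn (fun τ => decide (x τ < p)) (fun _ _ => mem_univ _) ?_
        intro τ hτ τ' hτ' hside
        by_contra hne
        have hdisj := M.disjoint_interior_J_s13 hτ.1 hτ'.1 hne
        have hxτ := hx τ hτ.1
        have hxτ' := hx τ' hτ'.1
        obtain ⟨a, b, -, hJ⟩ := M.J_closedInterval τ hτ.1.2
        obtain ⟨c, d, -, hJ'⟩ := M.J_closedInterval τ' hτ'.1.2
        rw [hJ, interior_Icc] at hxτ hdisj
        rw [hJ', interior_Icc] at hxτ' hdisj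
        exact not_disjoint_iff_nonempty_inter.mpr (hI.Ioo_inter_Ioo_nonempty hp hxτ hxτ'
          (fun h => hxE τ hτ.1 (hIE h)) (fun h => hxE τ' hτ'.1 (hIE h)) (hJ ▸ hτ.2)
          (hJ' ▸ hτ'.2) (decide_eq_decide.mp hside)) hdisj
    _ = 2 := by simp

end MoranStructure

theorem moran_component_union_basic_intervals_general
    (n : ℕ → ℕ) (r : ℕ → ℝ)
    (hr : ∀ k ≥ 1, 0 < r k ∧ (n k : ℝ) * r k < 1)
    (M : MoranStructure n r) :
    ∀ k ≥ 1, ∀ I : Set ℝ, IsCC (M.approx k) I →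
      I = (⋃ σ ∈ {σ : List ℕ | σ.length = k ∧ IsWord n σ ∧ M.J σ ⊆ I}, M.J σ) ∧
      {σ : List ℕ | σ.length = k ∧ IsWord n σ ∧ M.J σ ⊆ I}.Finite ∧
      {σ : List ℕ | σ.length = k ∧ IsWord n σ ∧ M.J σ ⊆ I}.ncard ≤ 2 * n k := by
  intro k hk I ⟨x₀, hx₀, hI⟩
  obtain ⟨k, rfl⟩ := Nat.exists_eq_add_of_le' hk
  have hS : {σ | σ.length = k + 1 ∧ IsWord n σ ∧ M.J σ ⊆ I} ⊆ words n (k + 1) :=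
    fun σ hσ => ⟨hσ.1, hσ.2.1⟩
  refine ⟨?_, (words_finite n _).subset hS, ?_⟩
  · subst hI
    have hJ : ∀ σ ∈ words n (k + 1), IsPreconnected (M.J σ) := fun σ hσ => by
      obtain ⟨a, b, -, hJ⟩ := M.J_closedInterval σ hσ.2
      exact hJ ▸ isPreconnected_Icc
    rw [show {σ | σ.length = k + 1 ∧ IsWord n σ ∧ M.J σ ⊆ _} = {σ | σ ∈ words n (k + 1) ∧ _}
      from ext fun _ => and_assoc.symm]
    exact connectedComponentIn_biUnion_eq hJ x₀
  · have hIE : I ⊆ M.approx (k + 1) := hI ▸ connectedComponentIn_subset _ _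
    have hT := M.ncard_setOf_J_inter_nonempty_le_two hr
      (hI ▸ isPreconnected_connectedComponentIn.ordConnected) hIE
      ⟨x₀, hI ▸ mem_connectedComponentIn hx₀⟩
    refine (ncard_le_ncard_mul_of_parent_mem (T := {τ | τ ∈ words n k ∧ (M.J τ ∩ I).Nonempty})
      ((words_finite n k).subset fun _ h => h.1) hS fun τ hτ i hi hσ => ⟨hτ, ?_⟩).trans
      (Nat.mul_le_mul_right _ hT)
    obtain ⟨y, hy⟩ := M.J_nonempty hσ.2.1
    exact ⟨y, M.J_subset τ hτ.2 i (hτ.1 ▸ hi) hy, hσ.2.2 hy⟩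

/-- **Components are unions of few basic intervals.** If `n_k r_k < 1` for all `k`,
then every connected component of the `k`-th approximation `E_k` is the union of
the basic intervals of rank `k` it contains, and there are at most `2 n_k` of them. -/
theorem moran_component_union_basic_intervals
    (n : ℕ → ℕ) (r : ℕ → ℝ)
    (hn : ∀ k ≥ 1, 2 ≤ n k)
    (hr : ∀ k ≥ 1, 0 < r k ∧ (n k : ℝ) * r k < 1)
    (M : MoranStructure n r) :
    ∀ k ≥ 1, ∀ I : Set ℝ, IsCC (M.approx k) I →
      I = (⋃ σ ∈ {σ : List ℕ | σ.length = k ∧ IsWord n σ ∧ M.J σ ⊆ I}, M.J σ) ∧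
      {σ : List ℕ | σ.length = k ∧ IsWord n σ ∧ M.J σ ⊆ I}.Finite ∧
      {σ : List ℕ | σ.length = k ∧ IsWord n σ ∧ M.J σ ⊆ I}.ncard ≤ 2 * n k :=
  moran_component_union_basic_intervals_general n r hr M
end
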